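/- arXiv:2503.10477 — 2 statements merged into one kernel-verified Lean document; each statement's English description precedes it below -/
import Mathlib

section
/- For a ν-tree T with associated pipe dream, the k-th weight vector of the corresponding facet of SC(Q_ν, w_ν) equals the sum of e_i over all pipes i lying above the lattice point p_k, i.e. ω(T,k) = Σ_{i: pipe i above p_k} e_i. -/
/-!
Label the unit edges of the Ferrers diagram by their lattice distance to its top-left corner.
Sweep the tiles of `P(T)` in the order of the word `Q_ν`, columns left to right and each column
bottom to top: a crossing tile at a point of label `d` exchanges the pipes on the edges labelled
`d` and `d + 1`, while an elbow leaves every pipe on its label. Hence the prefix product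
`∏ Q_{{1,…,k-1}∖I}` sends each label of the sweep line reached just before `p_k` to the pipe
crossing that edge, and the pipes passing above `p_k` are exactly those whose label is at most
`d(p_k)`, i.e. the support of `ω_{d(p_k)+1}` transported by that permutation.
-/

open scoped Classical

/-- Number of east steps (`false`) among the first `k` steps of the lattice path `ν`
(`true` = north step N, `false` = east step E). -/
def ecount (ν : List Bool) (k : ℕ) : ℕ := (ν.take k).count false

/-- Number of north steps (`true`) among the first `k` steps of `ν`. -/
def ncount (ν : List Bool) (k : ℕ) : ℕ := (ν.take k).count true

/-- The set `A_ν` of lattice points weakly above `ν` inside the smallest rectangle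
containing `ν` (the lattice points of the Ferrers diagram `F_ν`). -/
def Anu (ν : List Bool) : Set (ℤ × ℤ) :=
  {p | ∃ k ≤ ν.length, p.1 = (ecount ν k : ℤ) ∧ (ncount ν k : ℤ) ≤ p.2 ∧ p.2 ≤ (ν.count true : ℤ)}

/-- `p` is strictly southwest of `q`. -/
def strictSW (p q : ℤ × ℤ) : Prop := p.1 < q.1 ∧ p.2 < q.2

/-- The lattice points of the smallest axis-parallel rectangle containing `p` and `q`. -/
def rectPts (p q : ℤ × ℤ) : Set (ℤ × ℤ) :=
  {z | min p.1 q.1 ≤ z.1 ∧ z.1 ≤ max p.1 q.1 ∧ min p.2 q.2 ≤ z.2 ∧ z.2 ≤ max p.2 q.2}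

/-- `p` and `q` are ν-incompatible: one is strictly southwest (equivalently, the other is
strictly northeast) of the other and the rectangle they span lies inside `F_ν`. -/
def NuIncompatible (ν : List Bool) (p q : ℤ × ℤ) : Prop :=
  (strictSW p q ∨ strictSW q p) ∧ rectPts p q ⊆ Anu ν

/-- `p` and `q` are ν-compatible. -/
def NuCompatible (ν : List Bool) (p q : ℤ × ℤ) : Prop := ¬ NuIncompatible ν p q

/-- A ν-tree: a maximal collection of pairwise ν-compatible elements of `A_ν`. -/
def IsNuTree (ν : List Bool) (T : Set (ℤ × ℤ)) : Prop :=
  T ⊆ Anu ν ∧ (∀ p ∈ T, ∀ q ∈ T, NuCompatible ν p q) ∧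
    ∀ T', T ⊆ T' → T' ⊆ Anu ν → (∀ p ∈ T', ∀ q ∈ T', NuCompatible ν p q) → T' = T

/-- In the pipe dream `P(T)`, the tile at cell `c` is an elbow iff `c` is a node of `T`
or `c` lies outside the Ferrers diagram `F_ν`; all other tiles are crossings. -/
def tileElbow (ν : List Bool) (T : Set (ℤ × ℤ)) (c : ℤ × ℤ) : Prop := c ∈ T ∨ c ∉ Anu ν

/-- One step of a pipe in the pipe dream `P(T)`.  A state `(c, d)` records the cell `c`
currently being traversed together with the heading `d` (`true` = east, `false` = north)
with which the pipe entered `c`.  An elbow turns the pipe, a crossing lets it through. -/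
noncomputable def pstep (ν : List Bool) (T : Set (ℤ × ℤ)) :
    (ℤ × ℤ) × Bool → (ℤ × ℤ) × Bool := fun s =>
  let d' : Bool := if tileElbow ν T s.1 then !s.2 else s.2
  (cond d' (s.1.1 + 1, s.1.2) (s.1.1, s.1.2 + 1), d')

/-- The trajectory of pipe `i` in `P(T)`: pipes are labeled (from `0`) from top to bottom
on the left edge, pipe `i` entering the leftmost column heading east at height
`(#north steps of ν) - i`. -/
noncomputable def ptraj (ν : List Bool) (T : Set (ℤ × ℤ)) (i : ℕ) (k : ℕ) :
    (ℤ × ℤ) × Bool :=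
  (pstep ν T)^[k] (((0 : ℤ), (ν.count true : ℤ) - (i : ℤ)), true)

/-- Pipe `i` passes above the lattice point `p` (with the Ferrers diagram shifted by
`-(ε,ε)`): the unique cell of the column of `p` that the pipe traverses heading east is
weakly above `p`. -/
def PipeAbove (ν : List Bool) (T : Set (ℤ × ℤ)) (i : ℕ) (p : ℤ × ℤ) : Prop :=
  ∃ k, (ptraj ν T i k).2 = true ∧ (ptraj ν T i k).1.1 = p.1 ∧ p.2 ≤ (ptraj ν T i k).1.2

/-- Pipe `i` passes (strictly) below the lattice point `p`. -/
def PipeBelow (ν : List Bool) (T : Set (ℤ × ℤ)) (i : ℕ) (p : ℤ × ℤ) : Prop :=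
  ∃ k, (ptraj ν T i k).2 = true ∧ (ptraj ν T i k).1.1 = p.1 ∧ (ptraj ν T i k).1.2 < p.2

/-- Pipe `i` enters the cell `c` heading east. -/
def EntersE (ν : List Bool) (T : Set (ℤ × ℤ)) (i : ℕ) (c : ℤ × ℤ) : Prop :=
  ∃ k, ptraj ν T i k = (c, true)

/-- Pipe `i` enters the cell `c` heading north. -/
def EntersN (ν : List Bool) (T : Set (ℤ × ℤ)) (i : ℕ) (c : ℤ × ℤ) : Prop :=
  ∃ k, ptraj ν T i k = (c, false)

/-- An ascent of a ν-tree `T`: a node having a node of `T` to its north and a node of `T`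
to its east. -/
def IsAscent (ν : List Bool) (T : Set (ℤ × ℤ)) (a : ℤ × ℤ) : Prop :=
  a ∈ T ∧ (∃ p ∈ T, p.1 = a.1 ∧ a.2 < p.2) ∧ (∃ r ∈ T, r.2 = a.2 ∧ a.1 < r.1)

/-- The simple transposition `s_{p+1}` of the symmetric group on `Fin N`
(swapping the 0-indexed positions `p` and `p+1`). -/
def simpleT (N p : ℕ) : Equiv.Perm (Fin N) :=
  if h : p + 1 < N then Equiv.swap ⟨p, Nat.lt_of_succ_lt h⟩ ⟨p + 1, h⟩ else 1

/-- The lattice distance `d(p)` from `p` to the top-left corner of `F_ν`. -/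
def distTL (ν : List Bool) (p : ℤ × ℤ) : ℕ := (p.1 + ((ν.count true : ℤ) - p.2)).toNat

/-- The letter of the word `Q_ν` at the lattice point `p`: the simple transposition
`s_{d(p)+1}` (0-indexed: the swap of `d(p)` and `d(p)+1`). -/
def nuLetter (N : ℕ) (ν : List Bool) (p : ℤ × ℤ) : Equiv.Perm (Fin N) :=
  simpleT N (distTL ν p)

/-- The prefix product `∏ Q_{{1,…,k-1}∖I}` of the word `Q_ν` (positions enumerated by
`pos : Fin m → ℤ × ℤ`), over the positions before `k` not in `I`. -/
def nuPrefixPerm (N : ℕ) (ν : List Bool) {m : ℕ} (pos : Fin m → ℤ × ℤ)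
    (I : Finset (Fin m)) (k : Fin m) : Equiv.Perm (Fin N) :=
  (((List.finRange m).filter fun a => decide (a < k ∧ a ∉ I)).map
    fun a => nuLetter N ν (pos a)).prod

/-- The fundamental weight `ω_{d+1} = e_1 + ⋯ + e_{d+1}` (0-indexed coordinates `≤ d`). -/
def fundW (N d : ℕ) : Fin N → ℝ := fun j => if (j : ℕ) ≤ d then 1 else 0

/-- The weight function `ω(I,k) := (∏ Q_{{1,…,k-1}∖I})(ω_{q_k})`, the permutation acting
on `ℝ^N` by permuting coordinates. -/
def weightFn (N : ℕ) (ν : List Bool) {m : ℕ} (pos : Fin m → ℤ × ℤ)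
    (I : Finset (Fin m)) (k : Fin m) : Fin N → ℝ :=
  fun i => fundW N (distTL ν (pos k)) ((nuPrefixPerm N ν pos I k)⁻¹ i)

/-- The brick vector `b(I) := -∑_k ω(I,k)`. -/
noncomputable def brickVec (N : ℕ) (ν : List Bool) {m : ℕ} (pos : Fin m → ℤ × ℤ)
    (I : Finset (Fin m)) : Fin N → ℝ :=
  -∑ k : Fin m, weightFn N ν pos I k

open Set

/-- The row at which a pipe that enters a column heading east at row `r` leaves it heading
east, when `C` is the set of rows of the column carrying a crossing and all other tiles are
elbows. -/
noncomputable def exitRow (C : Set ℤ) (r : ℤ) : ℤ :=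
  if r ∈ C then r else sInf {q | r < q ∧ q ∉ C}

section ExitRow

variable {C : Set ℤ} {r q : ℤ}

theorem exitRow_of_mem (hr : r ∈ C) : exitRow C r = r := if_pos hr

theorem exitRow_eq (hr : r ∉ C) (hrq : r < q) (hq : q ∉ C)
    (hmid : ∀ t, r < t → t < q → t ∈ C) : exitRow C r = q := by
  rw [exitRow, if_neg hr]
  refine IsLeast.csInf_eq ⟨⟨hrq, hq⟩, fun t ⟨hrt, ht⟩ => ?_⟩
  by_contra! htq
  exact ht (hmid t hrt htq)

theorem exitRow_le (hrq : r < q) (hq : q ∉ C) : exitRow C r ≤ q := by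
  unfold exitRow
  split_ifs
  · exact hrq.le
  · exact csInf_le ⟨r, fun t ht => ht.1.le⟩ ⟨hrq, hq⟩

theorem exitRow_spec (hC : BddAbove C) (hr : r ∉ C) :
    r < exitRow C r ∧ exitRow C r ∉ C ∧ ∀ t, r < t → t < exitRow C r → t ∈ C := by
  obtain ⟨b, hb⟩ := hC
  have hbdd : BddBelow {q | r < q ∧ q ∉ C} := ⟨r, fun t ht => ht.1.le⟩
  have hne : {q | r < q ∧ q ∉ C}.Nonempty :=
    ⟨max r b + 1, by omega, fun h => by have := hb h; omega⟩
  have hmem := Int.csInf_mem hne hbdd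
  rw [exitRow, if_neg hr]
  refine ⟨hmem.1, hmem.2, fun t hrt ht => ?_⟩
  by_contra htC
  exact (csInf_le hbdd ⟨hrt, htC⟩).not_gt ht

theorem exitRow_empty (r : ℤ) : exitRow ∅ r = r + 1 :=
  exitRow_eq (notMem_empty r) (lt_add_one r) (notMem_empty _) fun t h1 h2 => by omega

theorem le_iff_add_one_le_exitRow {y : ℤ} (hC : ∀ t ∈ C, t < y) :
    y ≤ r ↔ y + 1 ≤ exitRow C r := by
  have hnot : ∀ t, y ≤ t → t ∉ C := fun t ht h => absurd (hC t h) (not_lt.mpr ht)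
  constructor
  · intro hyr
    rw [exitRow_eq (hnot r hyr) (lt_add_one r) (hnot _ (by omega)) fun t h1 h2 => by omega]
    omega
  · intro h
    by_contra! hry
    have := exitRow_le hry (hnot y le_rfl)
    omega

theorem exitRow_insert_of_lt {y : ℤ} (hC : ∀ t ∈ C, t < y) (r : ℤ) :
    exitRow (insert y C) r = Equiv.swap y (y + 1) (exitRow C r) := by
  have hy : y ∉ C := fun h => (hC y h).false
  have hnot : ∀ t, y < t → t ∉ insert y C := fun t ht h => by
    rcases h with h | h
    · omega
    · exact absurd (hC t h) (by omega)
  rcases lt_trichotomy r y with hry | rfl | hyr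
  · by_cases hr : r ∈ C
    · rw [exitRow_of_mem hr, exitRow_of_mem (mem_insert_of_mem y hr),
        Equiv.swap_apply_of_ne_of_ne hry.ne (by omega)]
    have hr' : r ∉ insert y C := fun h => h.elim (fun h => by omega) hr
    obtain ⟨hlt, hnotC, hmid⟩ := exitRow_spec ⟨y, fun t ht => (hC t ht).le⟩ hr
    rcases (exitRow_le hry hy).lt_or_eq with hR | hR
    · rw [Equiv.swap_apply_of_ne_of_ne hR.ne (by omega)]
      exact exitRow_eq hr' hlt (fun h => h.elim (fun h => by omega) hnotC)
        fun t h1 h2 => mem_insert_of_mem y (hmid t h1 h2)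
    · -- the pipe used to turn east at row `y`; now it crosses it and turns at `y + 1`
      rw [hR, Equiv.swap_apply_left]
      refine exitRow_eq hr' (by omega) (hnot _ (lt_add_one y)) fun t h1 h2 => ?_
      rcases (Int.lt_add_one_iff.mp h2).lt_or_eq with ht | ht
      · exact mem_insert_of_mem y (hmid t h1 (hR ▸ ht))
      · exact ht ▸ mem_insert y C
  · rw [exitRow_of_mem (mem_insert r C),
      exitRow_eq hy (lt_add_one r) (fun h => hnot _ (lt_add_one r) (mem_insert_of_mem r h))
        fun t h1 h2 => by omega, Equiv.swap_apply_right]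
  · have hnotC : ∀ t, y < t → t ∉ C := fun t ht h => hnot t ht (mem_insert_of_mem y h)
    rw [exitRow_eq (hnotC r hyr) (lt_add_one r) (hnotC _ (by omega)) fun t h1 h2 => by omega,
      exitRow_eq (hnot r hyr) (lt_add_one r) (hnot _ (by omega)) fun t h1 h2 => by omega,
      Equiv.swap_apply_of_ne_of_ne (by omega) (by omega)]

end ExitRow

theorem simpleT_apply_val {N d : ℕ} (hd : d + 1 < N) (j : Fin N) :
    (simpleT N d j : ℕ) =
      if (j : ℕ) = d then d + 1 else if (j : ℕ) = d + 1 then d else j := by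
  rw [simpleT, dif_pos hd, Equiv.swap_apply_def]
  split_ifs <;> simp_all [Fin.ext_iff]

/-- A row `r` of a column carries the diagonal label `c - r` on its entry side and `c + 1 - r`
on its exit side; reading the crossings bottom to top as the transpositions of their labels
gives the permutation from exit labels to entry labels. -/
theorem exitRow_prod_simpleT {N : ℕ} (c : ℤ) (ℓ : ℤ → ℕ) (ys : List ℤ)
    (hys : ys.Pairwise (· < ·)) (hℓ : ∀ y ∈ ys, (ℓ y : ℤ) = c - y ∧ ℓ y + 1 < N)
    (j : Fin N) :
    exitRow {y | y ∈ ys} (c - ((ys.map fun y => simpleT N (ℓ y)).prod j : ℕ)) =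
      c + 1 - j := by
  induction ys using List.reverseRecOn generalizing j with
  | nil =>
    simp only [List.not_mem_nil, ofPred_false, List.map_nil, List.prod_nil, Equiv.Perm.coe_one,
      id_eq, exitRow_empty]
    ring
  | append_singleton ys y ih =>
    obtain ⟨hys, -, hlt⟩ := List.pairwise_append.mp hys
    obtain ⟨hℓy, hN⟩ := hℓ y (by simp)
    have hset : {t | t ∈ ys ++ [y]} = insert y {t | t ∈ ys} := by
      ext t
      simp [or_comm]
    rw [hset, List.map_append, List.prod_append, List.map_singleton, List.prod_singleton,
      Equiv.Perm.mul_apply,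
      exitRow_insert_of_lt (C := {t | t ∈ ys}) fun t ht => hlt t ht y (by simp),
      ih hys (fun t ht => hℓ t (by simp [ht])), simpleT_apply_val hN, Equiv.swap_apply_def]
    split_ifs <;> omega

theorem fst_nonneg_of_mem_Anu {ν : List Bool} {p : ℤ × ℤ} (hp : p ∈ Anu ν) :
    0 ≤ p.1 := by
  obtain ⟨k, -, h, -⟩ := hp
  omega

theorem snd_le_of_mem_Anu {ν : List Bool} {p : ℤ × ℤ} (hp : p ∈ Anu ν) :
    p.2 ≤ ν.count true :=
  hp.choose_spec.2.2.2

section Pipes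

variable (ν : List Bool) (T : Set (ℤ × ℤ))

def crossRows (x : ℤ) : Set ℤ := {r | (x, r) ∈ Anu ν ∧ (x, r) ∉ T}

theorem bddAbove_crossRows (x : ℤ) : BddAbove (crossRows ν T x) :=
  ⟨ν.count true, fun _ hr => snd_le_of_mem_Anu hr.1⟩

/-- The row at which pipe `i` enters column `x` heading east. -/
noncomputable def entryRow (i : ℕ) : ℕ → ℤ
  | 0 => ν.count true - i
  | x + 1 => exitRow (crossRows ν T x) (entryRow i x)

variable {ν T}

theorem tileElbow_iff {x r : ℤ} : tileElbow ν T (x, r) ↔ r ∉ crossRows ν T x := by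
  simp only [tileElbow, crossRows, mem_ofPred_eq]
  tauto

theorem pstep_of_mem {x r : ℤ} (hr : r ∈ crossRows ν T x) (b : Bool) :
    pstep ν T ((x, r), b) = (cond b (x + 1, r) (x, r + 1), b) := by
  simp [pstep, tileElbow_iff.not.mpr (not_not.mpr hr)]

theorem pstep_of_not_mem {x r : ℤ} (hr : r ∉ crossRows ν T x) (b : Bool) :
    pstep ν T ((x, r), b) = (cond b (x, r + 1) (x + 1, r), !b) := by
  cases b <;> simp [pstep, tileElbow_iff.mpr hr]

theorem ptraj_succ (i k : ℕ) : ptraj ν T i (k + 1) = pstep ν T (ptraj ν T i k) :=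
  Function.iterate_succ_apply' _ _ _

theorem ptraj_mem_column (i k : ℕ) : ∃ x : ℕ,
    ptraj ν T i k = (((x : ℤ), entryRow ν T i x), true) ∨
    ∃ q, ptraj ν T i k = (((x : ℤ), q), false) ∧ entryRow ν T i x < q ∧
      q ≤ exitRow (crossRows ν T x) (entryRow ν T i x) := by
  induction k with
  | zero => exact ⟨0, Or.inl (by simp [ptraj, entryRow])⟩
  | succ k ih =>
    rw [ptraj_succ]
    obtain ⟨x, hk | ⟨q, hk, hrq, hqR⟩⟩ := ih <;> rw [hk]
    · by_cases hr : entryRow ν T i x ∈ crossRows ν T x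
      · refine ⟨x + 1, Or.inl ?_⟩
        rw [pstep_of_mem hr, entryRow, exitRow_of_mem hr]
        simp
      · exact ⟨x, Or.inr ⟨_, pstep_of_not_mem hr true, lt_add_one _,
          (exitRow_spec (bddAbove_crossRows ν T x) hr).1⟩⟩
    · have hr : entryRow ν T i x ∉ crossRows ν T x := fun h => by
        rw [exitRow_of_mem h] at hqR
        omega
      obtain ⟨-, hR, hmid⟩ := exitRow_spec (bddAbove_crossRows ν T x) hr
      by_cases hq : q ∈ crossRows ν T x
      · have : q ≠ exitRow (crossRows ν T x) (entryRow ν T i x) := fun h => hR (h ▸ hq)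
        exact ⟨x, Or.inr ⟨_, pstep_of_mem hq false, by omega, by omega⟩⟩
      · have : q = exitRow (crossRows ν T x) (entryRow ν T i x) :=
          hqR.eq_of_not_lt fun h => hq (hmid q hrq h)
        refine ⟨x + 1, Or.inl ?_⟩
        rw [pstep_of_not_mem hq, entryRow, ← this]
        simp

theorem exists_ptraj_eq_entryRow (i x : ℕ) :
    ∃ k, ptraj ν T i k = (((x : ℤ), entryRow ν T i x), true) := by
  induction x with
  | zero => exact ⟨0, by simp [ptraj, entryRow]⟩
  | succ x ih =>
    obtain ⟨k, hk⟩ := ih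
    set r := entryRow ν T i x
    by_cases hr : r ∈ crossRows ν T x
    · refine ⟨k + 1, ?_⟩
      rw [ptraj_succ, hk, pstep_of_mem hr, entryRow, exitRow_of_mem hr]
      simp
    set R := exitRow (crossRows ν T x) r
    obtain ⟨hlt, hR, hmid⟩ := exitRow_spec (bddAbove_crossRows ν T x) hr
    have climb : ∀ n : ℕ, r + 1 + n ≤ R →
        ∃ k', ptraj ν T i k' = (((x : ℤ), r + 1 + n), false) := by
      intro n
      induction n with
      | zero => exact fun _ => ⟨k + 1, by rw [ptraj_succ, hk, pstep_of_not_mem hr]; simp⟩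
      | succ n ihn =>
        intro hn
        obtain ⟨k', hk'⟩ := ihn (by omega)
        refine ⟨k' + 1, ?_⟩
        rw [ptraj_succ, hk', pstep_of_mem (hmid _ (by omega) (by omega))]
        simp [add_assoc]
    obtain ⟨k', hk'⟩ := climb (R - r - 1).toNat (by omega)
    refine ⟨k' + 1, ?_⟩
    rw [ptraj_succ, hk', show r + 1 + ((R - r - 1).toNat : ℤ) = R by omega, pstep_of_not_mem hR]
    simp [r, entryRow]

theorem pipeAbove_iff_le_entryRow (i x : ℕ) (y : ℤ) :
    PipeAbove ν T i ((x : ℤ), y) ↔ y ≤ entryRow ν T i x := by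
  constructor
  · rintro ⟨k, heast, hcol, hy⟩
    obtain ⟨x', hk | ⟨q, hk, -⟩⟩ := ptraj_mem_column (ν := ν) (T := T) i k <;>
      rw [hk] at heast hcol hy
    · rw [Nat.cast_inj.mp hcol] at hy
      exact hy
    · exact absurd heast Bool.false_ne_true
  · intro hy
    obtain ⟨k, hk⟩ := exists_ptraj_eq_entryRow (ν := ν) (T := T) i x
    exact ⟨k, by rw [hk], by rw [hk], by rw [hk]; exact hy⟩

end Pipes

theorem List.filter_or_eq_append {α : Type*} {l : List α} {p q : α → Bool}
    (hpq : ∀ a ∈ l, ¬(p a ∧ q a)) (hl : l.Pairwise fun a b => q a → ¬p b) :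
    l.filter (fun a => p a || q a) = l.filter p ++ l.filter q := by
  induction l with
  | nil => rfl
  | cons a l ih =>
    obtain ⟨ha, hl⟩ := List.pairwise_cons.mp hl
    have ih := ih (fun b hb => hpq b (List.mem_cons_of_mem a hb)) hl
    have hpqa := hpq a List.mem_cons_self
    cases hp : p a <;> cases hq : q a
    · simpa [hp, hq] using ih
    · have hnil : l.filter p = [] :=
        List.filter_eq_nil_iff.mpr fun b hb => by simpa using ha b hb hq
      simp [hp, hq, ih, hnil]
    · simp [hp, hq, ih]
    · exact absurd ⟨hp, hq⟩ hpqa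

def wordPerm (N : ℕ) (ν : List Bool) (l : List (ℤ × ℤ)) : Equiv.Perm (Fin N) :=
  (l.map (nuLetter N ν)).prod

section Word

variable {N : ℕ} {ν : List Bool} {T : Set (ℤ × ℤ)} {W : List (ℤ × ℤ)}

theorem filter_toLex_lt_eq_append (hW : W.Pairwise fun p q => toLex p < toLex q) (x y : ℤ) :
    W.filter (fun p => toLex p < toLex (x, y) ∧ p ∉ T) =
      W.filter (fun p => p.1 < x ∧ p ∉ T) ++
        W.filter (fun p => p.1 = x ∧ p.2 < y ∧ p ∉ T) := by
  rw [← List.filter_or_eq_append]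
  · refine List.filter_congr fun p _ => ?_
    simp only [Prod.Lex.toLex_lt_toLex, ← Bool.decide_or, decide_eq_decide]
    tauto
  · intro p _
    simp only [decide_eq_true_eq]
    omega
  · refine hW.imp fun {p q} hpq hq hp => ?_
    simp only [Prod.Lex.toLex_lt_toLex, decide_eq_true_eq] at hpq hp hq
    omega

theorem exitRow_wordPerm_column (hW : W.Pairwise fun p q => toLex p < toLex q)
    (hWA : ∀ p, p ∈ W ↔ p ∈ Anu ν) (hN : ∀ p ∈ Anu ν, distTL ν p + 1 < N) (x y : ℤ)
    (j : Fin N) :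
    exitRow (crossRows ν T x ∩ Iio y) (x + ν.count true -
      (wordPerm N ν (W.filter fun p => p.1 = x ∧ p.2 < y ∧ p ∉ T) j : ℕ)) =
      x + 1 + ν.count true - j := by
  set col := W.filter fun p => p.1 = x ∧ p.2 < y ∧ p ∉ T
  have hcol : ∀ p ∈ col, p = (x, p.2) ∧ p ∈ Anu ν := fun p hp => by
    simp only [col, List.mem_filter, decide_eq_true_eq] at hp
    exact ⟨Prod.ext hp.2.1 rfl, (hWA p).mp hp.1⟩
  have hperm : wordPerm N ν col =
      ((col.map Prod.snd).map fun r => simpleT N (distTL ν (x, r))).prod := by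
    rw [wordPerm, List.map_map]
    exact congrArg _ (List.map_congr_left fun p hp => congrArg (nuLetter N ν) (hcol p hp).1)
  have hrows : {r | r ∈ col.map Prod.snd} = crossRows ν T x ∩ Iio y := by
    ext r
    simp only [col, List.mem_map, List.mem_filter, decide_eq_true_eq, hWA, crossRows]
    constructor
    · rintro ⟨p, ⟨hp, rfl, hy, hT⟩, rfl⟩
      exact ⟨⟨hp, hT⟩, hy⟩
    · rintro ⟨⟨hp, hT⟩, hy⟩
      exact ⟨(x, r), ⟨hp, rfl, hy, hT⟩, rfl⟩
  have hsorted : (col.map Prod.snd).Pairwise (· < ·) := by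
    rw [List.pairwise_map]
    refine (hW.filter _).imp_of_mem fun hp hq hpq => ?_
    rw [(hcol _ hp).1, (hcol _ hq).1, Prod.Lex.toLex_lt_toLex] at hpq
    simpa using hpq
  rw [hperm, ← hrows, add_right_comm]
  refine exitRow_prod_simpleT _ _ _ hsorted (fun r hr => ?_) j
  obtain ⟨p, hp, rfl⟩ := List.mem_map.mp hr
  have hpA := (hcol p hp).2
  rw [(hcol p hp).1] at hpA
  have := fst_nonneg_of_mem_Anu hpA
  have := snd_le_of_mem_Anu hpA
  refine ⟨?_, hN _ hpA⟩
  simp only [distTL] at this ⊢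
  omega

theorem entryRow_wordPerm_fst_lt (hW : W.Pairwise fun p q => toLex p < toLex q)
    (hWA : ∀ p, p ∈ W ↔ p ∈ Anu ν) (hN : ∀ p ∈ Anu ν, distTL ν p + 1 < N) (x : ℕ)
    (j : Fin N) :
    entryRow ν T (wordPerm N ν (W.filter fun p => p.1 < x ∧ p ∉ T) j) x =
      x + ν.count true - j := by
  induction x generalizing j with
  | zero =>
    have hnil : W.filter (fun p => p.1 < ((0 : ℕ) : ℤ) ∧ p ∉ T) = [] :=
      List.filter_eq_nil_iff.mpr fun p hp => by
        have := fst_nonneg_of_mem_Anu ((hWA p).mp hp)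
        simp only [Nat.cast_zero, decide_eq_true_eq]
        omega
    rw [hnil]
    simp [wordPerm, entryRow]
  | succ x ih =>
    have hsplit : W.filter (fun p => p.1 < ((x + 1 : ℕ) : ℤ) ∧ p ∉ T) =
        W.filter (fun p => toLex p < toLex ((x : ℤ), (ν.count true : ℤ) + 1) ∧ p ∉ T) :=
      List.filter_congr fun p hp => by
        have := snd_le_of_mem_Anu ((hWA p).mp hp)
        simp only [Prod.Lex.toLex_lt_toLex, decide_eq_decide]
        push_cast
        exact and_congr_left fun _ => by omega
    have hcross : crossRows ν T x ∩ Iio (ν.count true + 1) = crossRows ν T x :=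
      inter_eq_left.mpr fun r hr => Int.lt_add_one_iff.mpr (snd_le_of_mem_Anu hr.1)
    rw [hsplit, filter_toLex_lt_eq_append hW, wordPerm, List.map_append, List.prod_append,
      Equiv.Perm.mul_apply, ← wordPerm, ← wordPerm, entryRow, ih, ← hcross,
      exitRow_wordPerm_column hW hWA hN]
    push_cast
    ring

theorem pipeAbove_iff_le_wordPerm_inv (hW : W.Pairwise fun p q => toLex p < toLex q)
    (hWA : ∀ p, p ∈ W ↔ p ∈ Anu ν) (hN : ∀ p ∈ Anu ν, distTL ν p + 1 < N) (i : Fin N)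
    (x : ℕ) (y : ℤ) :
    PipeAbove ν T i ((x : ℤ), y) ↔
      ((wordPerm N ν (W.filter fun p => toLex p < toLex ((x : ℤ), y) ∧ p ∉ T))⁻¹ i :
        ℤ) ≤ x + ν.count true - y := by
  set left := wordPerm N ν (W.filter fun p => p.1 < x ∧ p ∉ T)
  set col := wordPerm N ν (W.filter fun p => p.1 = x ∧ p.2 < y ∧ p ∉ T)
  set P := wordPerm N ν (W.filter fun p => toLex p < toLex ((x : ℤ), y) ∧ p ∉ T)
  have hP : P = left * col := by
    simp only [P, left, col, wordPerm, filter_toLex_lt_eq_append hW, List.map_append,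
      List.prod_append]
  have hentry : entryRow ν T i x = x + ν.count true - col (P⁻¹ i) := by
    have hi : left (col (P⁻¹ i)) = i := by
      rw [← Equiv.Perm.mul_apply, ← hP]
      exact P.apply_symm_apply i
    conv_lhs => rw [← hi]
    exact entryRow_wordPerm_fst_lt hW hWA hN x _
  have hexit := exitRow_wordPerm_column (T := T) hW hWA hN x y (P⁻¹ i)
  rw [← hentry] at hexit
  rw [pipeAbove_iff_le_entryRow,
    le_iff_add_one_le_exitRow fun t (ht : t ∈ crossRows ν T x ∩ Iio y) => ht.2, hexit]
  omega

end Word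

theorem weightFn_eq_sum_pipes_above_general (ν : List Bool) (T : Set (ℤ × ℤ))
    (N m : ℕ)
    (hN : ∀ p ∈ Anu ν, distTL ν p + 1 < N)
    (pos : Fin m → ℤ × ℤ)
    (hrange : Set.range pos = Anu ν)
    (hord : ∀ a b : Fin m, a < b ↔
      ((pos a).1 < (pos b).1 ∨ ((pos a).1 = (pos b).1 ∧ (pos a).2 < (pos b).2)))
    (I : Finset (Fin m)) (hI : ∀ k : Fin m, k ∈ I ↔ pos k ∈ T) :
    ∀ k : Fin m, weightFn N ν pos I k =
      ∑ i : Fin N, (if PipeAbove ν T (i : ℕ) (pos k) then Pi.single i (1 : ℝ) else 0) := by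
  intro k
  set W := (List.finRange m).map pos
  have hW : W.Pairwise fun p q => toLex p < toLex q := (List.pairwise_lt_finRange m).map pos
    fun a b hab => Prod.Lex.toLex_lt_toLex.mpr ((hord a b).mp hab)
  have hWA : ∀ p, p ∈ W ↔ p ∈ Anu ν := fun p => by simp [W, ← hrange]
  have hprefix : nuPrefixPerm N ν pos I k =
      wordPerm N ν (W.filter fun p => toLex p < toLex (pos k) ∧ p ∉ T) := by
    rw [nuPrefixPerm, wordPerm, List.filter_map, List.map_map]
    congr 2
    exact List.filter_congr fun a _ => by simp [hord, hI, Prod.Lex.toLex_lt_toLex]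
  have hpk : pos k ∈ Anu ν := hrange ▸ mem_range_self k
  obtain ⟨x, hx⟩ : ∃ x : ℕ, (pos k).1 = x :=
    ⟨(pos k).1.toNat, (Int.toNat_of_nonneg (fst_nonneg_of_mem_Anu hpk)).symm⟩
  have hdist : (distTL ν (pos k) : ℤ) = x + ν.count true - (pos k).2 := by
    have := snd_le_of_mem_Anu hpk
    simp only [distTL]
    omega
  funext i
  have hpipe := pipeAbove_iff_le_wordPerm_inv (T := T) hW hWA hN i x (pos k).2
  rw [← show pos k = ((x : ℤ), (pos k).2) from Prod.ext hx rfl, ← hprefix, ← hdist,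
    Nat.cast_le] at hpipe
  rw [Finset.sum_apply, Finset.sum_eq_single_of_mem i (Finset.mem_univ i) fun j _ hji => by
    simp [ite_apply, Pi.single_eq_of_ne hji.symm]]
  simp only [weightFn, fundW, ite_apply, Pi.single_eq_same, Pi.zero_apply, hpipe]

/-- for a ν-tree `T`, the `k`-th weight vector of the corresponding facet of
`SC(Q_ν, w_ν)` equals the sum of `e_i` over the pipes `i` lying above the lattice point
`p_k`.  Here `pos : Fin m → ℤ × ℤ` enumerates the lattice points of `A_ν` reading columns
left to right and each column bottom to top (the word `Q_ν`), `N` is the number of pipes,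
and `I` is the facet corresponding to `T`. -/
theorem weightFn_eq_sum_pipes_above (ν : List Bool) (T : Set (ℤ × ℤ))
    (hT : IsNuTree ν T) (N m : ℕ)
    (hN : ∀ p ∈ Anu ν, distTL ν p + 1 < N)
    (pos : Fin m → ℤ × ℤ) (hinj : Function.Injective pos)
    (hrange : Set.range pos = Anu ν)
    (hord : ∀ a b : Fin m, a < b ↔
      ((pos a).1 < (pos b).1 ∨ ((pos a).1 = (pos b).1 ∧ (pos a).2 < (pos b).2)))
    (I : Finset (Fin m)) (hI : ∀ k : Fin m, k ∈ I ↔ pos k ∈ T) :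
    ∀ k : Fin m, weightFn N ν pos I k =
      ∑ i : Fin N, (if PipeAbove ν T (i : ℕ) (pos k) then Pi.single i (1 : ℝ) else 0) :=
  weightFn_eq_sum_pipes_above_general ν T N m hN pos hrange hord I hI
end

section
/- For a ν-tree T, the cone C(T) = {x ∈ ℝ^{n+1} : ⟨x, β_t⟩ > 0 for all t ∈ T} is nonempty; equivalently, the contact graph of the pipe dream P(T) is acyclic. -/
open scoped Classical

open Matrix

/-!
Read the pipes of `P(T)` along the antidiagonals `x + y = s`, ordered from west to east, and
call a pipe active between its first and its last passage through a node of `T`. Two active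
pipes never cross: if one heading east met one heading north at a crossing `χ`, the node where
the first last turned (west of `χ`, in its row) and the node where the second next turns (north
of `χ`, in its column) would span a rectangle inside `F_ν`, so they would be ν-incompatible.
Hence two pipes keep their order while both are active, and an arc `i → j` of the contact graph
says that `i` is west of `j` at such a moment. A cycle of arcs is impossible: when the pipe of
the cycle that becomes active last does so, both its neighbours on the cycle are active and
ordered around it, so it can be cut out, down to a pipe west of itself. Counting the pipes
reachable from each pipe in the contact graph then gives a point of `C(T)`.
-/

open Function Relation

section Cycles

variable {α : Type*} {r : α → α → Prop}

theorem Relation.TransGen.exists_chain {a b : α} (h : TransGen r a b) :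
    ∃ n, ∃ c : ℕ → α, c 0 = a ∧ c (n + 1) = b ∧ ∀ i ≤ n, r (c i) (c (i + 1)) := by
  induction h using TransGen.head_induction_on with
  | @single a hab =>
    refine ⟨0, fun i => if i = 0 then a else b, rfl, rfl, fun i hi => ?_⟩
    obtain rfl : i = 0 := by omega
    exact hab
  | @head a c hac _ ih =>
    obtain ⟨n, d, rfl, hdn, hd⟩ := ih
    refine ⟨n + 1, fun | 0 => a | i + 1 => d i, rfl, hdn, ?_⟩
    rintro (_ | i) hi
    · exact hac
    · exact hd i (by omega)

theorem Relation.TransGen.exists_periodic_chain {a : α} (h : TransGen r a a) :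
    ∃ n, ∃ c : ℕ → α, Periodic c (n + 1) ∧ ∀ i, r (c i) (c (i + 1)) := by
  obtain ⟨n, c, hc0, hcn, hc⟩ := h.exists_chain
  refine ⟨n, fun i => c (i % (n + 1)), fun i => by simp, fun i => ?_⟩
  have hi : i % (n + 1) < n + 1 := Nat.mod_lt _ n.succ_pos
  show r (c (i % (n + 1))) (c ((i + 1) % (n + 1)))
  by_cases hlast : i % (n + 1) = n
  · rw [← Nat.mod_add_mod, hlast, Nat.mod_self, hc0, ← hcn]
    exact hc n le_rfl
  · rw [← Nat.mod_add_mod, Nat.mod_eq_of_lt (by omega : i % (n + 1) + 1 < n + 1)]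
    exact hc _ (by omega)

/-- The positions `j + 1, …, j + n` of an `r`-chain close up into a cyclic `r`-chain of period
`n` once `r` links `c (j + n)` back to `c (j + 1)`. -/
theorem periodic_chain_erase {c : ℕ → α} {n : ℕ} (hn : 0 < n)
    (hchain : ∀ i, r (c i) (c (i + 1))) {j : ℕ} (hskip : r (c (j + n)) (c (j + 1))) :
    Periodic (fun i => c (j + 1 + i % n)) n ∧
      ∀ i, r (c (j + 1 + i % n)) (c (j + 1 + (i + 1) % n)) := by
  refine ⟨fun i => by simp, fun i => ?_⟩
  have hi : i % n < n := Nat.mod_lt _ hn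
  by_cases hlast : i % n + 1 = n
  · rw [← Nat.mod_add_mod, hlast, Nat.mod_self, show j + 1 + i % n = j + n by omega]
    simpa using hskip
  · rw [← Nat.mod_add_mod, Nat.mod_eq_of_lt (by omega : i % n + 1 < n), ← add_assoc]
    exact hchain _

theorem exists_potential_of_acyclic [Fintype α] (h : ∀ a, ¬ TransGen r a a) :
    ∃ f : α → ℕ, ∀ a b, r a b → f b < f a := by
  classical
  refine ⟨fun a => (Finset.univ.filter (TransGen r a)).card,
    fun a b hab => Finset.card_lt_card ?_⟩
  refine (Finset.ssubset_iff_of_subset fun c hc => ?_).mpr ⟨b, ?_, ?_⟩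
  · simp only [Finset.mem_filter, Finset.mem_univ, true_and] at hc ⊢
    exact hc.head hab
  · simpa using TransGen.single hab
  · simpa using h b

end Cycles

section Sweep

variable {α β : Type*} [Preorder β]

def SweepBelow (alive : α → ℤ → Prop) (key : α → ℤ → β) (p q : α) : Prop :=
  ∃ s, alive p s ∧ alive q s ∧ key p s < key q s

variable {alive : α → ℤ → Prop} {key : α → ℤ → β}

theorem not_transGen_sweepBelow_self
    (hconn : ∀ p s₁ s₂ s, alive p s₁ → alive p s₂ → s₁ ≤ s → s ≤ s₂ → alive p s)
    (hbdd : ∀ p, BddBelow {s | alive p s})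
    (hback : ∀ p q s s', s ≤ s' → alive p s → alive q s → alive p s' → alive q s' →
      key p s' < key q s' → key p s < key q s) (a : α) :
    ¬ TransGen (SweepBelow alive key) a a := by
  intro h
  obtain ⟨n, c, hc, hchain⟩ := h.exists_periodic_chain
  induction n generalizing c with
  | zero =>
    obtain ⟨s, -, -, hlt⟩ := hchain 0
    rw [hc 0] at hlt
    exact lt_irrefl _ hlt
  | succ n ih =>
    have hbirth : ∀ i, ∃ b, alive (c i) b ∧ ∀ s, alive (c i) s → b ≤ s := fun i => by
      obtain ⟨s, hs, -⟩ := hchain i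
      exact Int.exists_least_of_bdd (hbdd (c i)) ⟨s, hs⟩
    choose b hb hbmin using hbirth
    obtain ⟨j, -, hj⟩ := Finset.exists_max_image (Finset.range (n + 2)) b ⟨0, by simp⟩
    have hmax : ∀ i, b i ≤ b j := fun i =>
      calc b i ≤ b (i % (n + 2)) := hbmin i _ (hc.map_mod_nat i ▸ hb _)
        _ ≤ b j := hj _ (Finset.mem_range.2 (Nat.mod_lt _ (by omega)))
    -- `c j` is born last, so its neighbours are alive at its birth and can be compared there
    have hat : ∀ i s, alive (c i) s → alive (c j) s → alive (c i) (b j) := fun i s hi hz =>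
      hconn _ _ _ _ (hb i) hi (hmax i) (hbmin j s hz)
    obtain ⟨s₁, hp₁, hz₁, hlt₁⟩ := hchain (j + (n + 1))
    rw [add_assoc, hc j] at hz₁ hlt₁
    obtain ⟨s₂, hz₂, hw₂, hlt₂⟩ := hchain j
    have hskip : SweepBelow alive key (c (j + (n + 1))) (c (j + 1)) :=
      ⟨b j, hat _ _ hp₁ hz₁, hat _ _ hw₂ hz₂,
        (hback _ _ _ _ (hbmin j s₁ hz₁) (hat _ _ hp₁ hz₁) (hb j) hp₁ hz₁ hlt₁).trans
          (hback _ _ _ _ (hbmin j s₂ hz₂) (hb j) (hat _ _ hw₂ hz₂) hz₂ hw₂ hlt₂)⟩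
    obtain ⟨hper, hch⟩ := periodic_chain_erase n.succ_pos hchain hskip
    exact ih _ hper hch

end Sweep

section Anu

variable (ν : List Bool)

theorem ecount_succ_le (k : ℕ) : ecount ν (k + 1) ≤ ecount ν k + 1 := by
  unfold ecount
  rw [List.take_add_one, List.count_append]
  rcases ν[k]? with _ | _ | _ <;> simp

theorem exists_ecount_eq {x k : ℕ} (h : x ≤ ecount ν k) : ∃ k' ≤ k, ecount ν k' = x := by
  induction k with
  | zero => exact ⟨0, le_rfl, by simp_all [ecount]⟩
  | succ k ih =>
    rcases Nat.lt_or_ge (ecount ν k) x with hlt | hle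
    · exact ⟨k + 1, le_rfl, by have := ecount_succ_le ν k; omega⟩
    · obtain ⟨k', hk', he⟩ := ih hle
      exact ⟨k', by omega, he⟩

theorem ncount_mono {k k' : ℕ} (h : k ≤ k') : ncount ν k ≤ ncount ν k' :=
  (List.take_sublist_take_left h).count_le _

theorem nonneg_of_mem_Anu {p : ℤ × ℤ} (hp : p ∈ Anu ν) : 0 ≤ p.1 ∧ 0 ≤ p.2 := by
  obtain ⟨k, -, h₁, h₂, -⟩ := hp
  omega

theorem le_count_of_mem_Anu {p : ℤ × ℤ} (hp : p ∈ Anu ν) : p.2 ≤ ν.count true :=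
  hp.choose_spec.2.2.2

theorem mk_mem_Anu_of_le {p : ℤ × ℤ} (hp : p ∈ Anu ν) {x y : ℤ} (hx₀ : 0 ≤ x) (hx : x ≤ p.1)
    (hy : p.2 ≤ y) (hyN : y ≤ ν.count true) : (x, y) ∈ Anu ν := by
  obtain ⟨k, hk, h₁, h₂, -⟩ := hp
  obtain ⟨k', hk', he⟩ := exists_ecount_eq ν (x := x.toNat) (k := k) (by omega)
  have := ncount_mono ν hk'
  exact ⟨k', hk'.trans hk, by simp only; omega, by simp only; omega, hyN⟩

theorem nuIncompatible_of_corner {χ v u : ℤ × ℤ} (hχ : χ ∈ Anu ν) (hv : v ∈ Anu ν)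
    (hu : u ∈ Anu ν) (hvχ : v.2 = χ.2) (hvx : v.1 < χ.1) (huχ : u.1 = χ.1) (huy : χ.2 < u.2) :
    NuIncompatible ν v u := by
  refine ⟨Or.inl ⟨by omega, by omega⟩, fun z ⟨hz₁, hz₂, hz₃, hz₄⟩ => ?_⟩
  have := (nonneg_of_mem_Anu ν hv).1
  have := le_count_of_mem_Anu ν hu
  rw [min_eq_left (by omega)] at hz₁ hz₃
  rw [max_eq_right (by omega)] at hz₂ hz₄
  exact mk_mem_Anu_of_le ν hχ (by omega) (by omega) (by omega) (by omega)

end Anu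

section Pipes

variable (ν : List Bool) (T : Set (ℤ × ℤ))

theorem pstep_snd (a : (ℤ × ℤ) × Bool) :
    (pstep ν T a).2 = if tileElbow ν T a.1 then !a.2 else a.2 := rfl

theorem pstep_fst (a : (ℤ × ℤ) × Bool) :
    (pstep ν T a).1 = cond (pstep ν T a).2 (a.1.1 + 1, a.1.2) (a.1.1, a.1.2 + 1) := rfl

/-- Orders states along an antidiagonal from west to east; in a shared cell the state heading
east comes first. -/
def stateKey (a : (ℤ × ℤ) × Bool) : ℤ := 2 * a.1.1 + cond a.2 0 1

theorem stateKey_pstep_lt_iff {a b : (ℤ × ℤ) × Bool} (hab : a.1.1 + a.1.2 = b.1.1 + b.1.2)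
    (hcross : a.1 = b.1 → a.2 ≠ b.2 → tileElbow ν T a.1) :
    stateKey (pstep ν T a) < stateKey (pstep ν T b) ↔ stateKey a < stateKey b := by
  obtain ⟨⟨x, y⟩, d⟩ := a
  obtain ⟨⟨x', y'⟩, d'⟩ := b
  simp only at hab hcross
  by_cases hx : x = x'
  · obtain ⟨rfl, rfl⟩ : x = x' ∧ y = y' := ⟨hx, by omega⟩
    by_cases he : tileElbow ν T (x, y) <;>
      cases d <;> cases d' <;> simp_all [stateKey, pstep_snd, pstep_fst, mul_add]
  · by_cases he : tileElbow ν T (x, y) <;> by_cases he' : tileElbow ν T (x', y') <;>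
      cases d <;> cases d' <;> simp [stateKey, pstep_snd, pstep_fst, he, he'] <;> omega

theorem pstep_fst_add_snd (a : (ℤ × ℤ) × Bool) :
    (pstep ν T a).1.1 + (pstep ν T a).1.2 = a.1.1 + a.1.2 + 1 := by
  rw [pstep_fst]; cases (pstep ν T a).2 <;> simp <;> ring

theorem le_pstep_fst_fst (a : (ℤ × ℤ) × Bool) : a.1.1 ≤ (pstep ν T a).1.1 := by
  rw [pstep_fst]; cases (pstep ν T a).2 <;> simp

theorem le_pstep_fst_snd (a : (ℤ × ℤ) × Bool) : a.1.2 ≤ (pstep ν T a).1.2 := by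
  rw [pstep_fst]; cases (pstep ν T a).2 <;> simp

theorem ptraj_fst_nonneg (i k : ℕ) : 0 ≤ (ptraj ν T i k).1.1 := by
  induction k with
  | zero => simp [ptraj]
  | succ k ih =>
    rw [ptraj, Function.iterate_succ_apply']
    exact ih.trans (le_pstep_fst_fst ν T _)

/-- The antidiagonal `x + y` of the cell a pipe enters at its start. -/
def pipeStart (i : ℕ) : ℤ := ν.count true - i

/-- The state of pipe `i` on the antidiagonal `x + y = s`; for `s < pipeStart ν i`, before the
pipe enters, this is its initial state. -/
noncomputable def pipeAt (i : ℕ) (s : ℤ) : (ℤ × ℤ) × Bool :=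
  ptraj ν T i (s - pipeStart ν i).toNat

theorem pipeAt_start_add (i k : ℕ) : pipeAt ν T i (pipeStart ν i + k) = ptraj ν T i k := by
  simp [pipeAt]

theorem pipeAt_add_one {i : ℕ} {s : ℤ} (hs : pipeStart ν i ≤ s) :
    pipeAt ν T i (s + 1) = pstep ν T (pipeAt ν T i s) := by
  unfold pipeAt ptraj
  rw [show (s + 1 - pipeStart ν i).toNat = (s - pipeStart ν i).toNat + 1 by omega,
    Function.iterate_succ_apply']

theorem pipeAt_antidiag {i : ℕ} {s : ℤ} (hs : pipeStart ν i ≤ s) :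
    (pipeAt ν T i s).1.1 + (pipeAt ν T i s).1.2 = s := by
  induction s, hs using Int.leInduction with
  | base => simp [pipeAt, ptraj, pipeStart]
  | succ s hs ih => rw [pipeAt_add_one ν T hs, pstep_fst_add_snd, ih]

theorem pipeAt_fst_nonneg (i : ℕ) (s : ℤ) : 0 ≤ (pipeAt ν T i s).1.1 :=
  ptraj_fst_nonneg ν T i _

theorem pipeAt_snd_mono {i : ℕ} {s s' : ℤ} (hs : pipeStart ν i ≤ s) (hss' : s ≤ s') :
    (pipeAt ν T i s).1.2 ≤ (pipeAt ν T i s').1.2 := by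
  induction s', hss' using Int.leInduction with
  | base => exact le_rfl
  | succ s' hss' ih =>
    rw [pipeAt_add_one ν T (hs.trans hss')]
    exact ih.trans (le_pstep_fst_snd ν T _)

theorem pipeAt_of_ptraj_eq {i k : ℕ} {a : (ℤ × ℤ) × Bool} (h : ptraj ν T i k = a) :
    pipeStart ν i ≤ a.1.1 + a.1.2 ∧ pipeAt ν T i (a.1.1 + a.1.2) = a := by
  have hs := pipeAt_antidiag ν T (i := i) (s := pipeStart ν i + k) (by omega)
  rw [pipeAt_start_add, h] at hs
  rw [hs, pipeAt_start_add]
  exact ⟨by omega, h⟩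

def VisitsNode (i : ℕ) (s : ℤ) : Prop := pipeStart ν i ≤ s ∧ (pipeAt ν T i s).1 ∈ T

def PipeActive (i : ℕ) (s : ℤ) : Prop :=
  ∃ s₀ s₁, s₀ ≤ s ∧ s ≤ s₁ ∧ VisitsNode ν T i s₀ ∧ VisitsNode ν T i s₁

theorem PipeActive.start_le {i : ℕ} {s : ℤ} (h : PipeActive ν T i s) : pipeStart ν i ≤ s := by
  obtain ⟨s₀, -, hs₀, -, h₀, -⟩ := h
  exact h₀.1.trans hs₀

theorem pipeActive_of_le_of_le (i : ℕ) (s₁ s₂ s : ℤ) (h₁ : PipeActive ν T i s₁)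
    (h₂ : PipeActive ν T i s₂) (hs₁ : s₁ ≤ s) (hs₂ : s ≤ s₂) : PipeActive ν T i s := by
  obtain ⟨s₀, -, hs₀, -, h₀, -⟩ := h₁
  obtain ⟨-, s₃, -, hs₃, -, h₃⟩ := h₂
  exact ⟨s₀, s₃, hs₀.trans hs₁, hs₂.trans hs₃, h₀, h₃⟩

theorem bddBelow_pipeActive (hTA : T ⊆ Anu ν) (i : ℕ) :
    BddBelow {s | PipeActive ν T i s} := by
  refine ⟨0, ?_⟩
  rintro s ⟨s₀, -, hs₀, -, h₀, -⟩
  have := nonneg_of_mem_Anu ν (hTA h₀.2)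
  have := pipeAt_antidiag ν T h₀.1
  omega

theorem exists_node_west {i : ℕ} {s₀ s : ℤ} {χ : ℤ × ℤ} (h₀ : VisitsNode ν T i s₀)
    (hs : s₀ ≤ s) (hχ : pipeAt ν T i s = (χ, true)) (hχA : χ ∈ Anu ν) :
    ∃ v ∈ T, v.2 = χ.2 ∧ v.1 ≤ χ.1 := by
  induction s, hs using Int.leInduction generalizing χ with
  | base => exact ⟨χ, by simpa [hχ] using h₀.2, rfl, le_rfl⟩
  | succ s hs ih =>
    rw [pipeAt_add_one ν T (h₀.1.trans hs)] at hχ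
    have hx₀ := pipeAt_fst_nonneg ν T i s
    set a := pipeAt ν T i s
    have hdir : (pstep ν T a).2 = true := by rw [hχ]
    have hcell : a.1 = (χ.1 - 1, χ.2) := by
      have : χ = (a.1.1 + 1, a.1.2) := by simpa [hdir, hχ] using pstep_fst ν T a
      simp [this]
    rw [hcell] at hx₀
    have haA : a.1 ∈ Anu ν := hcell ▸ mk_mem_Anu_of_le ν hχA hx₀ (by omega) le_rfl
      (le_count_of_mem_Anu ν hχA)
    by_cases he : tileElbow ν T a.1
    · exact ⟨a.1, he.resolve_right (not_not.2 haA), by simp [hcell], by simp [hcell]⟩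
    · have ha2 : a.2 = true := by rwa [pstep_snd, if_neg he] at hdir
      obtain ⟨v, hv, hv₂, hv₁⟩ := ih (χ := a.1) (Prod.ext rfl ha2) haA
      exact ⟨v, hv, by simp [hv₂, hcell], by simp [hcell] at hv₁; omega⟩

theorem exists_node_north (hTA : T ⊆ Anu ν) {i : ℕ} {s s₁ : ℤ} {χ : ℤ × ℤ}
    (hs : pipeStart ν i ≤ s) (h₁ : VisitsNode ν T i s₁) (hs₁ : s ≤ s₁)
    (hχ : pipeAt ν T i s = (χ, false)) (hχA : χ ∈ Anu ν) :
    ∃ u ∈ T, u.1 = χ.1 ∧ χ.2 ≤ u.2 := by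
  induction s, hs₁ using Int.leInductionDown generalizing χ with
  | base => exact ⟨χ, by simpa [hχ] using h₁.2, rfl, le_rfl⟩
  | pred s hs₁ ih =>
    by_cases he : tileElbow ν T χ
    · exact ⟨χ, he.resolve_right (not_not.2 hχA), rfl, le_rfl⟩
    have hnext : pipeAt ν T i s = ((χ.1, χ.2 + 1), false) := by
      have := pipeAt_add_one ν T hs
      rw [sub_add_cancel, hχ] at this
      rw [this]
      simp [pstep, he]
    -- a pipe heading north past the top row `#N` can never come back to a node
    have hN : χ.2 + 1 ≤ ν.count true := by
      have := pipeAt_snd_mono ν T (by omega) hs₁ (i := i)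
      rw [hnext] at this
      exact this.trans (le_count_of_mem_Anu ν (hTA h₁.2))
    obtain ⟨u, hu, hu₁, hu₂⟩ := ih (by omega) hnext
      (mk_mem_Anu_of_le ν hχA (nonneg_of_mem_Anu ν hχA).1 le_rfl (by omega) hN)
    exact ⟨u, hu, hu₁, by simp at hu₂; omega⟩

theorem tileElbow_of_active_of_meet (hTA : T ⊆ Anu ν)
    (hcompat : ∀ p ∈ T, ∀ q ∈ T, NuCompatible ν p q) {i j : ℕ} {s : ℤ}
    (hi : PipeActive ν T i s) (hj : PipeActive ν T j s)
    (hcell : (pipeAt ν T i s).1 = (pipeAt ν T j s).1)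
    (hdir : (pipeAt ν T i s).2 ≠ (pipeAt ν T j s).2) : tileElbow ν T (pipeAt ν T i s).1 := by
  wlog hE : (pipeAt ν T i s).2 = true generalizing i j
  · rw [hcell]
    exact this hj hi hcell.symm hdir.symm (by simpa [hE] using hdir.symm)
  have hjs := hj.start_le ν T
  by_contra he
  set χ := (pipeAt ν T i s).1 with hχ
  obtain ⟨hχT, hχA⟩ : χ ∉ T ∧ χ ∈ Anu ν := by simpa [tileElbow] using he
  obtain ⟨s₀, -, hs₀, -, h₀, -⟩ := hi
  obtain ⟨-, s₁, -, hs₁, -, h₁⟩ := hj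
  obtain ⟨v, hv, hv₂, hv₁⟩ := exists_node_west ν T h₀ hs₀ (Prod.ext rfl hE) hχA
  obtain ⟨u, hu, hu₁, hu₂⟩ := exists_node_north ν T hTA hjs h₁ hs₁
    (Prod.ext hcell.symm (by simpa [hE] using hdir.symm)) hχA
  have hvχ : v.1 < χ.1 := lt_of_le_of_ne hv₁ fun h =>
    hχT (by convert hv; exact Prod.ext h.symm hv₂.symm)
  have huχ : χ.2 < u.2 := lt_of_le_of_ne hu₂ fun h =>
    hχT (by convert hu; exact Prod.ext hu₁.symm h)
  exact hcompat v hv u hu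
    (nuIncompatible_of_corner ν hχA (hTA hv) (hTA hu) hv₂ hvχ hu₁ huχ)

theorem stateKey_lt_iff_of_active (hTA : T ⊆ Anu ν)
    (hcompat : ∀ p ∈ T, ∀ q ∈ T, NuCompatible ν p q) {i j : ℕ} {s s' : ℤ} (hss' : s ≤ s')
    (hi : PipeActive ν T i s) (hj : PipeActive ν T j s)
    (hi' : PipeActive ν T i s') (hj' : PipeActive ν T j s') :
    stateKey (pipeAt ν T i s) < stateKey (pipeAt ν T j s) ↔
      stateKey (pipeAt ν T i s') < stateKey (pipeAt ν T j s') := by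
  induction s', hss' using Int.leInduction with
  | base => exact Iff.rfl
  | succ σ hσ ih =>
    have hiσ := pipeActive_of_le_of_le ν T i s (σ + 1) σ hi hi' hσ (by omega)
    have hjσ := pipeActive_of_le_of_le ν T j s (σ + 1) σ hj hj' hσ (by omega)
    have hiσs := hiσ.start_le ν T
    have hjσs := hjσ.start_le ν T
    rw [ih hiσ hjσ, pipeAt_add_one ν T hiσs, pipeAt_add_one ν T hjσs]
    refine (stateKey_pstep_lt_iff ν T ?_ fun hc hd => ?_).symm
    · rw [pipeAt_antidiag ν T hiσs, pipeAt_antidiag ν T hjσs]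
    · exact tileElbow_of_active_of_meet ν T hTA hcompat hiσ hjσ hc hd

/-- The arc `i → j` of the contact graph of `P(T)`. -/
def Contact (i j : ℕ) : Prop := ∃ t ∈ T, EntersE ν T i t ∧ EntersN ν T j t

theorem Contact.sweepBelow {i j : ℕ} (h : Contact ν T i j) :
    SweepBelow (PipeActive ν T) (fun p s => stateKey (pipeAt ν T p s)) i j := by
  obtain ⟨t, ht, ⟨k, hk⟩, ⟨k', hk'⟩⟩ := h
  obtain ⟨hsi, hi⟩ := pipeAt_of_ptraj_eq ν T hk
  obtain ⟨hsj, hj⟩ := pipeAt_of_ptraj_eq ν T hk'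
  have active {p : ℕ} {d : Bool} (hs : pipeStart ν p ≤ t.1 + t.2)
      (hp : pipeAt ν T p (t.1 + t.2) = (t, d)) : PipeActive ν T p (t.1 + t.2) :=
    have hv : VisitsNode ν T p (t.1 + t.2) := ⟨hs, by rw [hp]; exact ht⟩
    ⟨_, _, le_rfl, le_rfl, hv, hv⟩
  refine ⟨t.1 + t.2, active hsi hi, active hsj hj, ?_⟩
  simp [hi, hj, stateKey]

theorem not_transGen_contact_self (hTA : T ⊆ Anu ν)
    (hcompat : ∀ p ∈ T, ∀ q ∈ T, NuCompatible ν p q) (i : ℕ) :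
    ¬ TransGen (Contact ν T) i i := fun h =>
  not_transGen_sweepBelow_self (pipeActive_of_le_of_le ν T) (bddBelow_pipeActive ν T hTA)
    (fun _ _ _ _ hss' hp hq hp' hq' =>
      (stateKey_lt_iff_of_active ν T hTA hcompat hss' hp hq hp' hq').2)
    i (TransGen.mono (fun _ _ => Contact.sweepBelow ν T) _ _ h)

end Pipes

/-- for a ν-tree `T`, the cone
`C(T) = {x : ⟨x, β_t⟩ > 0 for all t ∈ T}` is nonempty (equivalently, the contact graph
of the pipe dream `P(T)` is acyclic), where `β_t = e_i - e_j` for the pipes `i`, `j`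
meeting at the elbow of `P(T)` at `t`. -/
theorem cone_of_nuTree_nonempty (ν : List Bool) (T : Set (ℤ × ℤ))
    (hT : IsNuTree ν T) (N : ℕ)
    (β : ℤ × ℤ → (Fin N → ℝ))
    (hβ : ∀ t ∈ T, ∃ i j : Fin N, EntersE ν T (i : ℕ) t ∧ EntersN ν T (j : ℕ) t ∧
      β t = Pi.single i (1 : ℝ) - Pi.single j 1) :
    ∃ x : Fin N → ℝ, ∀ t ∈ T, 0 < x ⬝ᵥ β t := by
  obtain ⟨f, hf⟩ := exists_potential_of_acyclic (r := fun i j : Fin N => Contact ν T i j)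
    fun i h => not_transGen_contact_self ν T hT.1 hT.2.1 i
      (TransGen.lift Fin.val (fun _ _ => id) i i h)
  refine ⟨fun i => f i, fun t ht => ?_⟩
  obtain ⟨i, j, hE, hN, hβt⟩ := hβ t ht
  rw [hβt, dotProduct_sub, dotProduct_single, dotProduct_single, mul_one, mul_one, sub_pos]
  exact_mod_cast hf i j ⟨t, ht, hE, hN⟩
end
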